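/- arXiv:1711.01762 — 2 statements merged into one kernel-verified Lean document; each statement's English description precedes it below -/
import Mathlib

section
/- Let (X_i)_{i∈ℤ} be covariance stationary with autocovariance φ, and suppose there exist c > 0 and 0 < γ < 1 such that k^{γ} φ(k) → c as k → ∞. Then n^{γ} · Var( (1/n) ∑_{i=1}^{n} X_i ) → 2c / ((1 − γ)(2 − γ)) as n → ∞. -/
open MeasureTheory ProbabilityTheory Filter

section Aux
open Finset Asymptotics

lemma pow_diff_tendsto (p : ℝ) :
    Tendsto (fun n : ℕ => (((n : ℝ) + 1) ^ p - (n : ℝ) ^ p) * (n : ℝ) ^ (1 - p)) atTop (nhds p) := by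
  have hderiv : HasDerivAt (fun x : ℝ => x ^ p) p 1 := by
    have := Real.hasDerivAt_rpow_const (x := (1:ℝ)) (p := p) (Or.inl one_ne_zero)
    simpa using this
  have hslope := hasDerivAt_iff_tendsto_slope.mp hderiv
  have h1 : Tendsto (fun n : ℕ => (1 : ℝ) + 1 / n) atTop (nhdsWithin 1 {(1:ℝ)}ᶜ) := by
    apply tendsto_nhdsWithin_of_tendsto_nhds_of_eventually_within
    · simpa using ((tendsto_const_nhds (x := (1:ℝ))).add (tendsto_one_div_atTop_nhds_zero_nat (𝕜 := ℝ)))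
    · filter_upwards [eventually_ge_atTop 1] with n hn
      have : (0:ℝ) < 1 / n := by positivity
      simp only [Set.mem_compl_iff, Set.mem_singleton_iff]
      intro h
      nlinarith
  have h2 := hslope.comp h1
  have h3 : Tendsto (fun n : ℕ => (((1:ℝ) + 1/n) ^ p - 1) * n) atTop (nhds p) := by
    apply h2.congr'
    filter_upwards [eventually_ge_atTop 1] with n hn
    have hn0 : (0:ℝ) < n := by exact_mod_cast hn
    simp only [Function.comp_apply, slope_def_field, Real.one_rpow]
    rw [show (1:ℝ) + 1/n - 1 = 1/n by ring, div_div_eq_mul_div, div_one]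
  apply h3.congr'
  filter_upwards [eventually_ge_atTop 1] with n hn
  have hn0 : (0:ℝ) < n := by exact_mod_cast hn
  have hmul : ((n:ℝ) + 1) ^ p = (n:ℝ) ^ p * ((1:ℝ) + 1/n) ^ p := by
    rw [← Real.mul_rpow (le_of_lt hn0) (by positivity)]
    congr 1
    field_simp
  have hsub : (n:ℝ) ^ (1 - p) = n / (n:ℝ) ^ p := by
    rw [Real.rpow_sub hn0, Real.rpow_one]
  rw [hmul, hsub]
  have hp0 : (n:ℝ) ^ p ≠ 0 := (Real.rpow_pos_of_pos hn0 p).ne'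
  field_simp

lemma key_sum (b : ℕ → ℝ) (p L : ℝ) (hp : 0 < p)
    (h : Tendsto (fun k : ℕ => (k : ℝ) ^ (1 - p) * b k) atTop (nhds (p * L))) :
    Tendsto (fun n : ℕ => (∑ k ∈ range n, b k) / (n : ℝ) ^ p) atTop (nhds L) := by
  set g : ℕ → ℝ := fun k => ((k : ℝ) + 1) ^ p - (k : ℝ) ^ p with hg
  have hg_pos : ∀ k, 0 < g k := by
    intro k
    have : (k : ℝ) ^ p < ((k : ℝ) + 1) ^ p :=
      Real.rpow_lt_rpow (Nat.cast_nonneg k) (by linarith) hp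
    simpa [hg] using sub_pos.mpr this
  have hgsum : ∀ n : ℕ, ∑ k ∈ range n, g k = (n : ℝ) ^ p := by
    intro n
    have := Finset.sum_range_sub (f := fun k : ℕ => (k : ℝ) ^ p) n
    simp only [Nat.cast_add, Nat.cast_one] at this ⊢
    rw [hg]
    simp only []
    rw [this, Nat.cast_zero, Real.zero_rpow hp.ne', sub_zero]
  have hglim : Tendsto (fun k : ℕ => g k * (k : ℝ) ^ (1 - p)) atTop (nhds p) :=
    pow_diff_tendsto p
  have hratio : Tendsto (fun k : ℕ => b k / g k) atTop (nhds L) := by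
    have hdiv : Tendsto (fun k : ℕ => ((k : ℝ) ^ (1 - p) * b k) / (g k * (k : ℝ) ^ (1 - p)))
        atTop (nhds (p * L / p)) := h.div hglim hp.ne'
    rw [show p * L / p = L by field_simp] at hdiv
    apply hdiv.congr'
    filter_upwards [eventually_ge_atTop 1] with k hk
    have hk0 : (0 : ℝ) < k := by exact_mod_cast hk
    have h1 : ((k : ℝ)) ^ (1 - p) ≠ 0 := (Real.rpow_pos_of_pos hk0 _).ne'
    rw [mul_comm ((k:ℝ) ^ (1-p)) (b k), mul_div_mul_right _ _ h1]
  -- littleO step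
  have hlo : (fun k => b k - L * g k) =o[atTop] g := by
    rw [isLittleO_iff_tendsto' (by filter_upwards with k hk; exact absurd hk (hg_pos k).ne')]
    have := hratio.sub_const L
    apply (by simpa using this : Tendsto (fun k => b k / g k - L) atTop (nhds 0)).congr
    intro k
    field_simp [(hg_pos k).ne']
  have hsum := hlo.sum_range (fun k => (hg_pos k).le)
    (by rw [funext hgsum] ; exact (tendsto_rpow_atTop hp).comp tendsto_natCast_atTop_atTop)
  rw [isLittleO_iff_tendsto' (by
      filter_upwards [eventually_ge_atTop 1] with n hn h0
      exact absurd (hgsum n ▸ h0) (Real.rpow_pos_of_pos (by exact_mod_cast hn) p).ne')] at hsum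
  have hfin : Tendsto (fun n : ℕ => (∑ k ∈ range n, (b k - L * g k)) / (n : ℝ) ^ p + L)
      atTop (nhds (0 + L)) := by
    apply Tendsto.add_const
    apply hsum.congr
    intro n
    rw [hgsum n]
  rw [zero_add] at hfin
  apply hfin.congr'
  filter_upwards [eventually_ge_atTop 1] with n hn
  have hn0 : (0 : ℝ) < (n : ℝ) ^ p := Real.rpow_pos_of_pos (by exact_mod_cast hn) p
  rw [Finset.sum_sub_distrib, ← Finset.mul_sum, hgsum n]
  field_simp
  ring

lemma Icc_eq_map (n : ℕ) :
    Finset.Icc (1 : ℤ) (n : ℤ) =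
      (Finset.range n).map ⟨fun i : ℕ => (i : ℤ) + 1, fun a b hab => by simp only [] at hab; omega⟩ := by
  ext x
  simp only [Finset.mem_Icc, Finset.mem_map, Finset.mem_range, Function.Embedding.coeFn_mk]
  constructor
  · intro hx
    exact ⟨(x - 1).toNat, by omega, by show (((x - 1).toNat : ℕ) : ℤ) + 1 = x; omega⟩
  · rintro ⟨a, ha, rfl⟩
    show 1 ≤ (a : ℤ) + 1 ∧ (a : ℤ) + 1 ≤ (n : ℤ)
    omega

lemma double_sum_eq (g : ℤ → ℝ) (hsym : ∀ k : ℤ, g (-k) = g k) (n : ℕ) :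
    ∑ i ∈ Finset.range n, ∑ j ∈ Finset.range n, g ((j : ℤ) - (i : ℤ)) =
      n * g 0 + 2 * ∑ m ∈ Finset.range n, ∑ k ∈ Finset.range m, g ((k : ℤ) + 1) := by
  induction n with
  | zero => simp
  | succ n ih =>
    rw [Finset.sum_range_succ]
    have hrefl : ∀ m : ℕ, ∑ j ∈ Finset.range m, g ((m : ℤ) - (j : ℤ))
        = ∑ k ∈ Finset.range m, g ((k : ℤ) + 1) := by
      intro m
      rw [← Finset.sum_range_reflect (fun k => g ((k : ℤ) + 1)) m]
      apply Finset.sum_congr rfl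
      intro j hj
      rw [Finset.mem_range] at hj
      congr 1
      omega
    have hinner : ∀ i ∈ Finset.range n,
        ∑ j ∈ Finset.range (n + 1), g ((j : ℤ) - (i : ℤ))
          = (∑ j ∈ Finset.range n, g ((j : ℤ) - (i : ℤ))) + g ((n : ℤ) - (i : ℤ)) := by
      intro i _
      rw [Finset.sum_range_succ]
    rw [Finset.sum_congr rfl hinner, Finset.sum_add_distrib, ih, Finset.sum_range_succ,
      hrefl n]
    have hlast : ∑ j ∈ Finset.range n, g ((j : ℤ) - (n : ℤ))
        = ∑ k ∈ Finset.range n, g ((k : ℤ) + 1) := by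
      rw [← hrefl n]
      apply Finset.sum_congr rfl
      intro j hj
      rw [← hsym ((j : ℤ) - (n : ℤ))]
      congr 1
      ring
    rw [hlast]
    rw [Finset.sum_range_succ (fun m => ∑ k ∈ Finset.range m, g ((k : ℤ) + 1)) n]
    have h0 : ((n:ℤ) - (n:ℤ)) = 0 := by ring
    rw [h0]
    push_cast
    ring

end Aux

/-- Covariance of two real random variables. -/
noncomputable def cov {Ω : Type*} [MeasurableSpace Ω] (P : Measure Ω) (X Y : Ω → ℝ) : ℝ :=
  ∫ ω, (X ω - ∫ ω', X ω' ∂P) * (Y ω - ∫ ω', Y ω' ∂P) ∂P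

section Aux2

variable {Ω : Type*} [MeasurableSpace Ω] {P : Measure Ω}

lemma integrable_mul_of_L2 {f g : Ω → ℝ} (hf : MemLp f 2 P) (hg : MemLp g 2 P) :
    Integrable (fun ω => f ω * g ω) P := by
  have h1 := hf.integrable_sq
  have h2 := hg.integrable_sq
  refine Integrable.mono' ((h1.add h2).div_const 2)
    (hf.aestronglyMeasurable.mul hg.aestronglyMeasurable) ?_
  filter_upwards with ω
  simp only [Pi.add_apply, Real.norm_eq_abs, abs_mul]
  nlinarith [abs_nonneg (f ω), abs_nonneg (g ω), sq_abs (f ω), sq_abs (g ω),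
    sq_nonneg (|f ω| - |g ω|)]

lemma cov_comm (X Y : Ω → ℝ) : cov P X Y = cov P Y X := by
  unfold cov
  exact integral_congr_ae (Filter.Eventually.of_forall fun ω => mul_comm _ _)

lemma variance_sum_eq [IsProbabilityMeasure P] {ι : Type*} (s : Finset ι) (Y : ι → Ω → ℝ)
    (h : ∀ i ∈ s, MemLp (Y i) 2 P) :
    variance (fun ω => ∑ i ∈ s, Y i ω) P = ∑ i ∈ s, ∑ j ∈ s, cov P (Y i) (Y j) := by
  classical
  set m : ι → ℝ := fun i => ∫ ω, Y i ω ∂P with hm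
  have hZ : MemLp (fun ω => ∑ i ∈ s, Y i ω) 2 P := by
    have heq : (fun ω => ∑ i ∈ s, Y i ω) = ∑ i ∈ s, Y i := by
      funext ω; simp
    rw [heq]; exact memLp_finset_sum' s h
  have hint : ∀ i ∈ s, Integrable (Y i) P := fun i hi => (h i hi).integrable one_le_two
  have hEZ : (∫ ω, (∑ i ∈ s, Y i ω) ∂P) = ∑ i ∈ s, m i := integral_finset_sum s hint
  have hC : ∀ i ∈ s, MemLp (fun ω => Y i ω - m i) 2 P := fun i hi =>
    (h i hi).sub (memLp_const (m i))
  have hprod : ∀ i ∈ s, ∀ j ∈ s,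
      Integrable (fun ω => (Y i ω - m i) * (Y j ω - m j)) P := fun i hi j hj =>
    integrable_mul_of_L2 (hC i hi) (hC j hj)
  rw [variance_eq_integral hZ.aestronglyMeasurable.aemeasurable]
  have heq2 : ∀ ω : Ω, ((∑ i ∈ s, Y i ω) - ∫ x, ∑ i ∈ s, Y i x ∂P) ^ 2
      = ∑ i ∈ s, ∑ j ∈ s, (Y i ω - m i) * (Y j ω - m j) := by
    intro ω
    rw [hEZ, ← Finset.sum_sub_distrib, sq, Finset.sum_mul_sum]
  rw [integral_congr_ae (g := fun x => ∑ i ∈ s, ∑ j ∈ s, (Y i x - m i) * (Y j x - m j))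
    (Filter.Eventually.of_forall fun x => by
      exact heq2 x)]
  rw [integral_finset_sum s (fun i hi => integrable_finset_sum s (fun j hj => hprod i hi j hj))]
  refine Finset.sum_congr rfl fun i hi => ?_
  rw [integral_finset_sum s (fun j hj => hprod i hi j hj)]
  refine Finset.sum_congr rfl fun j hj => ?_
  rfl

end Aux2

/-- Under long-range dependence with autocovariances `φ(k) ∼ c·k^{-γ}`, `0 < γ < 1`,
`n^γ · Var(sample mean) → 2c/((1-γ)(2-γ))`. -/
theorem scaled_variance_sample_mean_LRD {Ω : Type*} [MeasurableSpace Ω] (P : Measure Ω)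
    [IsProbabilityMeasure P] (X : ℤ → Ω → ℝ) (φ : ℤ → ℝ)
    (hL2 : ∀ i, MemLp (X i) 2 P)
    (hstat : ∀ i j : ℤ, cov P (X i) (X j) = φ (j - i))
    (c γ : ℝ) (hc : 0 < c) (hγ0 : 0 < γ) (hγ1 : γ < 1)
    (hdecay : Tendsto (fun k : ℕ => (k : ℝ) ^ γ * φ k) atTop (nhds c)) :
    Tendsto (fun n : ℕ =>
        (n : ℝ) ^ γ * variance (fun ω => (1 / n : ℝ) * ∑ i ∈ Finset.Icc (1 : ℤ) n, X i ω) P)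
      atTop (nhds (2 * c / ((1 - γ) * (2 - γ)))) := by
  classical
  have hsym : ∀ k : ℤ, φ (-k) = φ k := by
    intro k
    have h1 := hstat k 0
    have h2 := hstat 0 k
    rw [zero_sub] at h1
    rw [sub_zero] at h2
    rw [← h1, ← h2, cov_comm]
  -- variance formula
  have hvar : ∀ n : ℕ, variance (fun ω => (1 / n : ℝ) * ∑ i ∈ Finset.Icc (1:ℤ) n, X i ω) P
      = (1 / n : ℝ)^2 * ((n : ℝ) * φ 0
          + 2 * ∑ m ∈ Finset.range n, ∑ k ∈ Finset.range m, φ ((k:ℤ) + 1)) := by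
    intro n
    rw [variance_const_mul]
    congr 1
    rw [variance_sum_eq (Finset.Icc (1:ℤ) (n:ℤ)) X (fun i _ => hL2 i)]
    rw [show ∑ i ∈ Finset.Icc (1:ℤ) (n:ℤ), ∑ j ∈ Finset.Icc (1:ℤ) (n:ℤ), cov P (X i) (X j)
        = ∑ i ∈ Finset.Icc (1:ℤ) (n:ℤ), ∑ j ∈ Finset.Icc (1:ℤ) (n:ℤ), φ (j - i) from
      Finset.sum_congr rfl fun i _ => Finset.sum_congr rfl fun j _ => hstat i j]
    rw [Icc_eq_map n]
    simp only [Finset.sum_map, Function.Embedding.coeFn_mk]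
    change ∑ i ∈ Finset.range n, ∑ j ∈ Finset.range n, φ (((j:ℤ) + 1) - ((i:ℤ) + 1)) = _
    rw [show ∑ i ∈ Finset.range n, ∑ j ∈ Finset.range n, φ ((j:ℤ) + 1 - ((i:ℤ) + 1))
        = ∑ i ∈ Finset.range n, ∑ j ∈ Finset.range n, φ ((j:ℤ) - (i:ℤ)) from
      Finset.sum_congr rfl fun i _ => Finset.sum_congr rfl fun j _ => by ring_nf]
    rw [double_sum_eq φ hsym n]
  -- step A
  have hA : Tendsto (fun m : ℕ => (∑ k ∈ Finset.range m, φ ((k:ℤ) + 1)) / (m:ℝ) ^ (1 - γ))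
      atTop (nhds (c / (1 - γ))) := by
    apply key_sum _ _ _ (by linarith)
    rw [show (1 - γ) * (c / (1 - γ)) = c by rw [mul_comm]; exact div_mul_cancel₀ c (by linarith), show 1 - (1 - γ) = γ by ring]
    have h1 : Tendsto (fun k : ℕ => ((k:ℝ) + 1) ^ γ * φ ((k:ℤ) + 1)) atTop (nhds c) := by
      have := hdecay.comp (tendsto_add_atTop_nat 1)
      apply this.congr
      intro k
      simp only [Function.comp_apply]
      push_cast
      ring_nf
    have h2 : Tendsto (fun k : ℕ => ((k:ℝ) / ((k:ℝ) + 1)) ^ γ) atTop (nhds 1) := by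
      have hb : Tendsto (fun k : ℕ => (k:ℝ) / ((k:ℝ) + 1)) atTop (nhds 1) := by
        simpa using tendsto_natCast_div_add_atTop (𝕜 := ℝ) (1:ℝ)
      have := hb.rpow_const (Or.inr hγ0.le)
      simpa using this
    have := h2.mul h1
    rw [one_mul] at this
    apply this.congr
    intro k
    have hpos : (0:ℝ) < (k:ℝ) + 1 := by positivity
    have hne : ((k:ℝ) + 1) ^ γ ≠ 0 := (Real.rpow_pos_of_pos hpos γ).ne'
    rw [Real.div_rpow (Nat.cast_nonneg k) hpos.le]
    field_simp
  -- step B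
  have hB : Tendsto (fun n : ℕ =>
        (∑ m ∈ Finset.range n, ∑ k ∈ Finset.range m, φ ((k:ℤ) + 1)) / (n:ℝ) ^ (2 - γ))
      atTop (nhds (c / ((1 - γ) * (2 - γ)))) := by
    apply key_sum _ _ _ (by linarith)
    rw [show (2 - γ) * (c / ((1 - γ) * (2 - γ))) = c / (1 - γ) by
      rw [← div_div, mul_comm]
      exact div_mul_cancel₀ _ (by linarith)]
    rw [show (1 : ℝ) - (2 - γ) = -(1 - γ) by ring]
    apply hA.congr'
    filter_upwards [eventually_ge_atTop 1] with k hk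
    have hk0 : (0:ℝ) < k := by exact_mod_cast hk
    rw [Real.rpow_neg hk0.le, div_eq_mul_inv, mul_comm]
  -- final assembly
  have hterm1 : Tendsto (fun n : ℕ => φ 0 * (n:ℝ) ^ (γ - 1)) atTop (nhds 0) := by
    have h1 : Tendsto (fun n : ℕ => (n:ℝ) ^ (-(1 - γ))) atTop (nhds 0) :=
      (tendsto_rpow_neg_atTop (by linarith)).comp tendsto_natCast_atTop_atTop
    rw [show γ - 1 = -(1 - γ) by ring]
    simpa using tendsto_const_nhds.mul h1
  have hfinal := hterm1.add (hB.const_mul 2)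
  rw [show (0:ℝ) + 2 * (c / ((1 - γ) * (2 - γ))) = 2 * c / ((1 - γ) * (2 - γ)) by ring]
    at hfinal
  apply hfinal.congr'
  filter_upwards [eventually_ge_atTop 1] with n hn
  rw [hvar n]
  have hn0 : (0:ℝ) < n := by exact_mod_cast hn
  have hγpos : (0:ℝ) < (n:ℝ) ^ γ := Real.rpow_pos_of_pos hn0 γ
  have e1 : (n:ℝ) ^ (γ - 1) = (n:ℝ) ^ γ / (n:ℝ) := by
    rw [Real.rpow_sub hn0, Real.rpow_one]
  have e2 : (n:ℝ) ^ (2 - γ) = (n:ℝ) ^ (2:ℕ) / (n:ℝ) ^ γ := by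
    rw [Real.rpow_sub hn0]
    norm_num [Real.rpow_natCast]
  rw [e1, e2]
  field_simp
end

section
/- Let (X_i)_{i∈ℤ} be covariance stationary with autocovariance φ, and suppose there exists c > 0 such that k · φ(k) → c as k → ∞. Then (n / log n) · Var( (1/n) ∑_{i=1}^{n} X_i ) → 2c as n → ∞. -/
open MeasureTheory ProbabilityTheory Filter

lemma integrable_mul_of_memL2 {Ω : Type*} [MeasurableSpace Ω] {P : Measure Ω} {f g : Ω → ℝ}
    (hf : MemLp f 2 P) (hg : MemLp g 2 P) : Integrable (fun ω => f ω * g ω) P := by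
  refine ((hf.integrable_sq.add hg.integrable_sq).div_const 2).mono'
    (hf.aestronglyMeasurable.mul hg.aestronglyMeasurable) (ae_of_all _ fun ω => ?_)
  simp only [Real.norm_eq_abs, abs_mul, Pi.add_apply]
  nlinarith [sq_nonneg (|f ω| - |g ω|), sq_abs (f ω), sq_abs (g ω)]

lemma variance_finset_sum {Ω : Type*} [MeasurableSpace Ω] (P : Measure Ω)
    [IsProbabilityMeasure P] (X : ℤ → Ω → ℝ) (hL2 : ∀ i, MemLp (X i) 2 P) (s : Finset ℤ) :
    variance (fun ω => ∑ i ∈ s, X i ω) P = ∑ i ∈ s, ∑ j ∈ s, cov P (X i) (X j) := by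
  have hint : ∀ i, Integrable (X i) P := fun i => (hL2 i).integrable one_le_two
  have hY2 : ∀ i, MemLp (fun ω => X i ω - ∫ ω', X i ω' ∂P) 2 P :=
    fun i => (hL2 i).sub (memLp_const _)
  have hprod : ∀ i j, Integrable
      (fun ω => (X i ω - ∫ ω', X i ω' ∂P) * (X j ω - ∫ ω', X j ω' ∂P)) P :=
    fun i j => integrable_mul_of_memL2 (hY2 i) (hY2 j)
  have hsum : MemLp (fun ω => ∑ i ∈ s, X i ω) 2 P := by
    have h := memLp_finset_sum' s (fun i _ => hL2 i)
    have he : (∑ i ∈ s, X i) = fun ω => ∑ i ∈ s, X i ω := by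
      funext ω; simp
    rwa [he] at h
  have hv : variance (fun ω => ∑ i ∈ s, X i ω) P = ∫ ω, ((((fun ω => ∑ i ∈ s, X i ω)
        - fun _ => ∫ ω', ∑ i ∈ s, X i ω' ∂P : Ω → ℝ) ^ (2 : ℕ)) : Ω → ℝ) ω ∂P := by
    rw [variance_eq_integral hsum.1.aemeasurable]; rfl
  rw [hv]
  have key : ∀ ω, ((((fun ω => ∑ i ∈ s, X i ω)
        - fun _ => ∫ ω', ∑ i ∈ s, X i ω' ∂P : Ω → ℝ) ^ (2 : ℕ)) : Ω → ℝ) ω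
      = ∑ i ∈ s, ∑ j ∈ s,
          (X i ω - ∫ ω', X i ω' ∂P) * (X j ω - ∫ ω', X j ω' ∂P) := by
    intro ω
    have hmean : ∫ ω', ∑ i ∈ s, X i ω' ∂P = ∑ i ∈ s, ∫ ω', X i ω' ∂P :=
      integral_finset_sum s fun i _ => hint i
    simp only [Pi.pow_apply, Pi.sub_apply, hmean, ← Finset.sum_sub_distrib, sq,
      Finset.sum_mul_sum]
  rw [integral_congr_ae (ae_of_all _ key),
    integral_finset_sum s (fun i _ => integrable_finset_sum s fun j _ => hprod i j)]
  refine Finset.sum_congr rfl fun i _ => ?_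
  rw [integral_finset_sum s fun j _ => hprod i j]
  rfl

lemma sum_Icc_one_int (f : ℤ → ℝ) (n : ℕ) :
    ∑ j ∈ Finset.Icc (1:ℤ) (n:ℤ), f j = ∑ k ∈ Finset.range n, f ((k:ℤ)+1) := by
  have hmap : Finset.Icc (1:ℤ) (n:ℤ)
      = Finset.map ⟨fun k : ℕ => (k:ℤ)+1, show Function.Injective (fun k : ℕ => (k:ℤ)+1) by intro a b h; simp only at h; omega⟩ (Finset.range n) := by
    ext x
    simp only [Finset.mem_Icc, Finset.mem_map, Finset.mem_range, Function.Embedding.coeFn_mk]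
    constructor
    · intro h; exact ⟨(x-1).toNat, by omega, by omega⟩
    · rintro ⟨a, ha, rfl⟩; omega
  rw [hmap, Finset.sum_map]
  simp

lemma double_sum_phi (φ : ℤ → ℝ) (hsym : ∀ k : ℤ, φ (-k) = φ k) (n : ℕ) :
    ∑ i ∈ Finset.Icc (1:ℤ) (n:ℤ), ∑ j ∈ Finset.Icc (1:ℤ) (n:ℤ), φ (j - i)
      = (n:ℝ) * φ 0 + 2 * ∑ k ∈ Finset.range n, ((n:ℝ) - (k+1)) * φ ((k:ℤ)+1) := by
  induction n with
  | zero => simp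
  | succ n ih =>
    have hins : Finset.Icc (1:ℤ) ((n+1:ℕ):ℤ) = insert ((n:ℤ)+1) (Finset.Icc (1:ℤ) (n:ℤ)) := by
      ext x
      simp only [Finset.mem_Icc, Finset.mem_insert]
      push_cast
      omega
    have ha : ((n:ℤ)+1) ∉ Finset.Icc (1:ℤ) (n:ℤ) := by simp
    rw [hins, Finset.sum_insert ha, Finset.sum_insert ha]
    have hrow : ∀ i ∈ Finset.Icc (1:ℤ) (n:ℤ),
        ∑ j ∈ insert ((n:ℤ)+1) (Finset.Icc (1:ℤ) (n:ℤ)), φ (j - i)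
          = φ ((n:ℤ)+1 - i) + ∑ j ∈ Finset.Icc (1:ℤ) (n:ℤ), φ (j - i) :=
      fun i _ => Finset.sum_insert ha
    rw [Finset.sum_congr rfl hrow, Finset.sum_add_distrib, ih]
    have e1 : φ ((n:ℤ)+1 - ((n:ℤ)+1)) = φ 0 := by norm_num
    have e2 : ∑ j ∈ Finset.Icc (1:ℤ) (n:ℤ), φ (j - ((n:ℤ)+1))
        = ∑ j ∈ Finset.Icc (1:ℤ) (n:ℤ), φ (((n:ℤ)+1) - j) :=
      Finset.sum_congr rfl fun j _ => by rw [← hsym (((n:ℤ)+1) - j)]; ring_nf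
    have e3 : ∑ j ∈ Finset.Icc (1:ℤ) (n:ℤ), φ (((n:ℤ)+1) - j)
        = ∑ k ∈ Finset.range n, φ ((k:ℤ)+1) := by
      rw [sum_Icc_one_int (fun j => φ ((n:ℤ)+1 - j)) n,
        ← Finset.sum_range_reflect (fun k => φ ((k:ℤ)+1)) n]
      refine Finset.sum_congr rfl fun k hk => ?_
      have hk' := Finset.mem_range.mp hk
      congr 1
      omega
    have e4 : ∑ k ∈ Finset.range (n+1), ((↑(n+1):ℝ) - (k+1)) * φ ((k:ℤ)+1)
        = ∑ k ∈ Finset.range n, ((n:ℝ) - (k+1)) * φ ((k:ℤ)+1)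
          + ∑ k ∈ Finset.range n, φ ((k:ℤ)+1) := by
      have hz : ((↑(n+1):ℝ) - ((n:ℝ)+1)) * φ ((n:ℤ)+1) = 0 := by push_cast; ring
      rw [Finset.sum_range_succ, hz, add_zero, ← Finset.sum_add_distrib]
      exact Finset.sum_congr rfl fun k _ => by push_cast; ring
    rw [e1, e2, e3, e4]
    push_cast
    ring

lemma tendsto_A_div (φ : ℤ → ℝ) (c : ℝ)
    (hdecay : Tendsto (fun k : ℕ => (k : ℝ) * φ k) atTop (nhds c)) :
    Tendsto (fun n : ℕ => (∑ k ∈ Finset.range n, ((n:ℝ) - (k+1)) * φ ((k:ℤ)+1))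
        / ((n:ℝ) * Real.log n)) atTop (nhds c) := by
  set a : ℕ → ℝ := fun k => ((k:ℝ)+1) * φ ((k:ℤ)+1) with ha_def
  have ha : Tendsto a atTop (nhds c) := by
    have h := hdecay.comp (tendsto_add_atTop_nat 1)
    refine h.congr fun k => ?_
    simp only [Function.comp_apply, ha_def]
    push_cast
    ring_nf
  set L : ℕ → ℝ := fun n => Real.log n with hL_def
  set S1 : ℕ → ℝ := fun n => ∑ k ∈ Finset.range n, φ ((k:ℤ)+1) with hS1_def
  set S2 : ℕ → ℝ := fun n => ∑ k ∈ Finset.range n, a k with hS2_def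
  have hA : ∀ n : ℕ, (∑ k ∈ Finset.range n, ((n:ℝ) - (k+1)) * φ ((k:ℤ)+1))
      = (n:ℝ) * S1 n - S2 n := by
    intro n
    rw [hS1_def, hS2_def, Finset.mul_sum, ← Finset.sum_sub_distrib]
    exact Finset.sum_congr rfl fun k _ => by rw [ha_def]; ring
  have hL0 : Tendsto (fun n : ℕ => (L n)⁻¹) atTop (nhds 0) :=
    (Real.tendsto_log_atTop.comp tendsto_natCast_atTop_atTop).inv_tendsto_atTop
  have hS2 : Tendsto (fun n : ℕ => (n:ℝ)⁻¹ * S2 n) atTop (nhds c) := ha.cesaro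
  set H : ℕ → ℝ := fun n => ∑ k ∈ Finset.range n, ((k:ℝ)+1)⁻¹ with hH_def
  have hHtop : Tendsto H atTop atTop :=
    Real.tendsto_sum_range_one_div_nat_succ_atTop.congr
      (fun n => Finset.sum_congr rfl fun k _ => by rw [one_div])
  have hcast : ∀ n : ℕ, ((harmonic n : ℚ) : ℝ) = H n := by
    intro n
    rw [harmonic, hH_def]
    push_cast
    try rfl
  have hHL : Tendsto (fun n : ℕ => H n / L n) atTop (nhds 1) := by
    have h0 : Tendsto (fun n : ℕ => (H n - L n) * (L n)⁻¹) atTop (nhds 0) := by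
      have hd : Tendsto (fun n : ℕ => H n - L n) atTop (nhds Real.eulerMascheroniConstant) :=
        Real.tendsto_harmonic_sub_log.congr fun n => by rw [hcast]
      simpa using hd.mul hL0
    have heq : ∀ᶠ n in atTop, (H n - L n) * (L n)⁻¹ + 1 = H n / L n := by
      filter_upwards [eventually_ge_atTop 2] with n hn
      have hLpos : 0 < L n := Real.log_pos (by exact_mod_cast hn)
      field_simp
      ring
    have := (h0.add tendsto_const_nhds).congr' heq
    simpa using this
  have hg0 : ∀ k : ℕ, (0:ℝ) ≤ ((k:ℝ)+1)⁻¹ := fun k => by positivity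
  have hf : (fun k : ℕ => a k * ((k:ℝ)+1)⁻¹ - c * ((k:ℝ)+1)⁻¹)
      =o[atTop] (fun k : ℕ => ((k:ℝ)+1)⁻¹) := by
    have h1 : (fun k : ℕ => a k - c) =o[atTop] (fun _ : ℕ => (1:ℝ)) :=
      (Asymptotics.isLittleO_one_iff ℝ).2 (by simpa using ha.sub_const c)
    have h2 := h1.mul_isBigO (Asymptotics.isBigO_refl (fun k : ℕ => ((k:ℝ)+1)⁻¹) atTop)
    simpa [sub_mul] using h2
  have hsumo := hf.sum_range hg0 hHtop
  have hS1H : ∀ n : ℕ, ∑ k ∈ Finset.range n, (a k * ((k:ℝ)+1)⁻¹ - c * ((k:ℝ)+1)⁻¹)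
      = S1 n - c * H n := by
    intro n
    rw [Finset.sum_sub_distrib, ← Finset.mul_sum, hS1_def, hH_def]
    congr 1
    refine Finset.sum_congr rfl fun k _ => ?_
    rw [ha_def]
    have : ((k:ℝ)+1) ≠ 0 := by positivity
    field_simp
  have h5 : Tendsto (fun n : ℕ => (S1 n - c * H n) / H n) atTop (nhds 0) := by
    have := hsumo.tendsto_div_nhds_zero
    refine this.congr fun n => ?_
    rw [hS1H]
  have h6 : Tendsto (fun n : ℕ => (S1 n - c * H n) / L n) atTop (nhds 0) := by
    have hmul := h5.mul hHL
    have heq : ∀ᶠ n in atTop, (S1 n - c * H n) / H n * (H n / L n)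
        = (S1 n - c * H n) / L n := by
      filter_upwards [eventually_ge_atTop 1] with n hn
      have hHpos : 0 < H n := by
        rw [← hcast]
        exact_mod_cast harmonic_pos (Nat.one_le_iff_ne_zero.mp hn)
      rw [div_mul_div_comm, mul_comm (H n) (L n), mul_div_mul_right _ _ hHpos.ne']
    simpa using hmul.congr' heq
  have hS1L : Tendsto (fun n : ℕ => S1 n / L n) atTop (nhds c) := by
    have h7 : ∀ n : ℕ, (S1 n - c * H n) / L n + c * (H n / L n) = S1 n / L n := by
      intro n
      rw [mul_div_assoc', ← add_div, sub_add_cancel]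
    have := h6.add (hHL.const_mul c)
    simpa using this.congr h7
  have hS2L : Tendsto (fun n : ℕ => S2 n / ((n:ℝ) * L n)) atTop (nhds 0) := by
    have hmul := hS2.mul hL0
    have : Tendsto (fun n : ℕ => (n:ℝ)⁻¹ * S2 n * (L n)⁻¹) atTop (nhds 0) := by
      simpa using hmul
    refine this.congr fun n => ?_
    rw [div_eq_mul_inv, mul_inv]
    ring
  have heq : ∀ᶠ n in atTop, S1 n / L n - S2 n / ((n:ℝ) * L n)
      = (∑ k ∈ Finset.range n, ((n:ℝ) - (k+1)) * φ ((k:ℤ)+1)) / ((n:ℝ) * L n) := by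
    filter_upwards [eventually_ge_atTop 1] with n hn
    have hn0 : ((n:ℝ)) ≠ 0 := by positivity
    rw [hA n, sub_div, mul_div_mul_left _ _ hn0]
  have := (hS1L.sub hS2L).congr' heq
  simpa using this

/-- In the boundary long-range dependence case `k·φ(k) → c`,
`(n / log n) · Var(sample mean) → 2c`. -/
theorem scaled_variance_sample_mean_LRD_boundary {Ω : Type*} [MeasurableSpace Ω]
    (P : Measure Ω) [IsProbabilityMeasure P] (X : ℤ → Ω → ℝ) (φ : ℤ → ℝ)
    (hL2 : ∀ i, MemLp (X i) 2 P)
    (hstat : ∀ i j : ℤ, cov P (X i) (X j) = φ (j - i))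
    (c : ℝ) (hc : 0 < c)
    (hdecay : Tendsto (fun k : ℕ => (k : ℝ) * φ k) atTop (nhds c)) :
    Tendsto (fun n : ℕ =>
        ((n : ℝ) / Real.log n) *
          variance (fun ω => (1 / n : ℝ) * ∑ i ∈ Finset.Icc (1 : ℤ) n, X i ω) P)
      atTop (nhds (2 * c)) := by
  have hsym : ∀ k : ℤ, φ (-k) = φ k := by
    intro k
    have h1 := hstat k 0
    have h2 := hstat 0 k
    have hcomm : cov P (X k) (X 0) = cov P (X 0) (X k) := by
      unfold cov
      exact integral_congr_ae (ae_of_all _ fun ω => by ring)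
    simp only [zero_sub, sub_zero] at h1 h2
    rw [← h1, ← h2, hcomm]
  have hvar : ∀ n : ℕ, variance (fun ω => ∑ i ∈ Finset.Icc (1:ℤ) (n:ℤ), X i ω) P
      = (n:ℝ) * φ 0 + 2 * ∑ k ∈ Finset.range n, ((n:ℝ) - (k+1)) * φ ((k:ℤ)+1) := by
    intro n
    rw [variance_finset_sum P X hL2, ← double_sum_phi φ hsym n]
    exact Finset.sum_congr rfl fun i _ => Finset.sum_congr rfl fun j _ => hstat i j
  have hlim := tendsto_A_div φ c hdecay
  have hL0 : Tendsto (fun n : ℕ => (Real.log n)⁻¹) atTop (nhds 0) :=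
    (Real.tendsto_log_atTop.comp tendsto_natCast_atTop_atTop).inv_tendsto_atTop
  have hfirst : Tendsto (fun n : ℕ => φ 0 / Real.log n) atTop (nhds 0) := by
    have := hL0.const_mul (φ 0)
    simpa [div_eq_mul_inv] using this
  have htarget : ∀ᶠ (n : ℕ) in atTop,
      φ 0 / Real.log n
        + 2 * ((∑ k ∈ Finset.range n, ((n:ℝ) - (k+1)) * φ ((k:ℤ)+1)) / ((n:ℝ) * Real.log n))
      = ((n : ℝ) / Real.log n) *
          variance (fun ω => (1 / n : ℝ) * ∑ i ∈ Finset.Icc (1 : ℤ) n, X i ω) P := by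
    filter_upwards [eventually_ge_atTop 2] with n hn
    have hn0 : (0:ℝ) < (n:ℝ) := by
      have : (0:ℕ) < n := by omega
      exact_mod_cast this
    have hL : 0 < Real.log n := Real.log_pos (by exact_mod_cast hn)
    rw [variance_const_mul, hvar n]
    field_simp
  have hfinal := hfirst.add (hlim.const_mul 2)
  have := hfinal.congr' htarget
  simpa using this
end
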